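/- arXiv:1801.05597 — 2 statements merged into one kernel-verified Lean document; each statement's English description precedes it below -/
import Mathlib

section
/- For any γ ≥ 0 and any M > 0, the double integral ∫₀^γ ∫₀^∞ e^{(iu−M)s} s^{−1/2} ds du equals √(2π) · ( √(√(M²+γ²) − M) + i·( √(√(M²+γ²) + M) − √(2M) ) ). -/
open MeasureTheory Set Complex Filter

lemma real_int {M : ℝ} (hM : 0 < M) {c : ℝ} (hc : -1 < c) :
    IntegrableOn (fun s : ℝ ↦ s ^ c * Real.exp (-M * s)) (Ioi 0) := by
  simpa using integrableOn_rpow_mul_exp_neg_mul_rpow hc one_pos hM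

lemma cont_cpow (c : ℂ) : ContinuousOn (fun s : ℝ ↦ (s : ℂ) ^ c) (Ioi 0) := by
  intro x hx
  exact ((continuousAt_cpow_const (Or.inl (by simpa using hx))).comp
    Complex.continuous_ofReal.continuousAt).continuousWithinAt

lemma meas_aux (z c : ℂ) :
    AEStronglyMeasurable (fun s : ℝ ↦ Complex.exp (z * s) * (s : ℂ) ^ c)
      (volume.restrict (Ioi 0)) := by
  refine ContinuousOn.aestronglyMeasurable ?_ measurableSet_Ioi
  exact ((Complex.continuous_exp.comp
    (continuous_const.mul Complex.continuous_ofReal)).continuousOn).mul (cont_cpow c)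

lemma norm_aux {M : ℝ} (u : ℝ) (c : ℂ) {s : ℝ} (hs : 0 < s) :
    ‖Complex.exp ((u * I - M) * s) * (s : ℂ) ^ c‖ = s ^ c.re * Real.exp (-M * s) := by
  rw [norm_mul, Complex.norm_exp,
    Complex.norm_cpow_eq_rpow_re_of_pos hs, mul_comm]
  congr 2
  simp [Complex.sub_re, Complex.mul_re]


lemma cint {M : ℝ} (hM : 0 < M) (u : ℝ) {c : ℂ} (hc : -1 < c.re) :
    IntegrableOn (fun s : ℝ ↦ Complex.exp ((u * I - M) * s) * (s : ℂ) ^ c) (Ioi 0) := by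
  refine (real_int hM hc).integrable.mono' (meas_aux _ _) ?_
  filter_upwards [ae_restrict_mem measurableSet_Ioi] with s hs
  rw [norm_aux u c hs]

lemma key_deriv (z : ℂ) {x : ℝ} (hx : 0 < x) :
    HasDerivAt (fun y : ℝ ↦ (y:ℂ)^((1/2):ℂ) * Complex.exp (z*y))
      ((1/2:ℂ) * (x:ℂ)^(-(1/2):ℂ) * Complex.exp (z*x)
        + (x:ℂ)^((1/2):ℂ) * (Complex.exp (z*x) * z)) x := by
  have h0 := hasDerivAt_ofReal_cpow_const' hx.ne' (show (-(1/2):ℂ) ≠ -1 by norm_num)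
  rw [show ((-(1/2):ℂ)+1) = 1/2 by norm_num] at h0
  have h1 := h0.const_mul ((1/2):ℂ)
  rw [show (fun y:ℝ ↦ (1/2:ℂ)*((y:ℂ)^((1/2):ℂ)/(1/2))) = fun y:ℝ ↦ (y:ℂ)^((1/2):ℂ) by
    funext y; field_simp] at h1
  have h2 : HasDerivAt (fun y : ℝ ↦ Complex.exp (z*y)) (Complex.exp (z*x) * z) x := by
    have hlin : HasDerivAt (fun y : ℝ ↦ z * (y:ℂ)) z x := by
      simpa using (Complex.ofRealCLM.hasDerivAt (x := x)).const_mul z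
    simpa using hlin.cexp
  exact h1.mul h2

lemma ibp {M : ℝ} (hM : 0 < M) (u : ℝ) :
    ∫ s in Ioi (0:ℝ), Complex.exp (((u:ℂ)*I - M)*s) * (s:ℂ)^((1/2):ℂ)
      = -(1/(2*((u:ℂ)*I - (M:ℂ)))) *
        ∫ s in Ioi (0:ℝ), Complex.exp (((u:ℂ)*I - M)*s) * (s:ℂ)^(-(1/2):ℂ) := by
  set z : ℂ := (u:ℂ)*I - M with hzdef
  have hz : z ≠ 0 := by
    intro h
    have := congrArg Complex.re h
    simp [hzdef, Complex.sub_re, Complex.mul_re] at this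
    linarith
  have i1 : IntegrableOn (fun s : ℝ ↦ (1/2:ℂ) * (Complex.exp (z*s) * (s:ℂ)^(-(1/2):ℂ))) (Ioi 0) :=
    (cint hM u (by norm_num)).const_mul _
  have i2 : IntegrableOn (fun s : ℝ ↦ z * (Complex.exp (z*s) * (s:ℂ)^((1/2):ℂ))) (Ioi 0) :=
    (cint hM u (by norm_num)).const_mul _
  have hsum : (∫ s in Ioi (0:ℝ), ((1/2:ℂ) * (Complex.exp (z*s) * (s:ℂ)^(-(1/2):ℂ))
      + z * (Complex.exp (z*s) * (s:ℂ)^((1/2):ℂ)))) = 0 := by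
    have h0 : (0:ℂ) = 0 - (fun y:ℝ ↦ (y:ℂ)^((1/2):ℂ) * Complex.exp (z*y)) 0 := by
      simp [Complex.zero_cpow (show ((1/2):ℂ) ≠ 0 by norm_num)]
    rw [h0]
    apply MeasureTheory.integral_Ioi_of_hasDerivAt_of_tendsto (f := fun y:ℝ ↦ (y:ℂ)^((1/2):ℂ) * Complex.exp (z*y)) (m := 0) (a := 0)
    · -- continuity at 0 within Ici 0
      apply ContinuousWithinAt.congr (f := fun y:ℝ ↦ ((Real.sqrt y : ℝ):ℂ) * Complex.exp (z*y))
      · exact ((Complex.continuous_ofReal.comp Real.continuous_sqrt).mul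
          (Complex.continuous_exp.comp (continuous_const.mul
            Complex.continuous_ofReal))).continuousWithinAt
      · intro y hy
        rw [Real.sqrt_eq_rpow, Complex.ofReal_cpow hy, Complex.ofReal_div,
          Complex.ofReal_one, Complex.ofReal_ofNat]
      · rw [Real.sqrt_zero]
        simp [Complex.zero_cpow (show ((1/2):ℂ) ≠ 0 by norm_num)]
    · intro x hx
      have h := key_deriv z hx
      refine h.congr_deriv (Eq.symm ?_)
      ring
    · exact i1.add i2
    · apply squeeze_zero_norm' (a := fun x : ℝ ↦ x ^ ((1/2):ℝ) * Real.exp (-M * x))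
      · filter_upwards [Filter.eventually_gt_atTop (0:ℝ)] with x hx
        rw [mul_comm ((x:ℂ)^((1/2):ℂ))]
        rw [hzdef, norm_aux u ((1/2):ℂ) hx]
        norm_num
      · exact tendsto_rpow_mul_exp_neg_mul_atTop_nhds_zero _ _ hM
  rw [MeasureTheory.integral_add i1 i2, integral_const_mul, integral_const_mul] at hsum
  set A := ∫ s in Ioi (0:ℝ), Complex.exp (z*s) * (s:ℂ)^(-(1/2):ℂ) with hA
  set B := ∫ s in Ioi (0:ℝ), Complex.exp (z*s) * (s:ℂ)^((1/2):ℂ) with hB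
  have h2z : (2:ℂ)*z ≠ 0 := mul_ne_zero two_ne_zero hz
  rw [show -(1/(2*z)) * A = -A / (2*z) by ring, eq_div_iff h2z]
  linear_combination (2:ℂ) * hsum

lemma F_hasDeriv {M : ℝ} (hM : 0 < M) (u : ℝ) :
    HasDerivAt (fun v : ℝ ↦ ∫ s in Ioi (0:ℝ), Complex.exp (((v:ℂ)*I - M)*s) * (s:ℂ)^(-(1/2):ℂ))
      (I * ∫ s in Ioi (0:ℝ), Complex.exp (((u:ℂ)*I - M)*s) * (s:ℂ)^((1/2):ℂ)) u := by
  have main := hasDerivAt_integral_of_dominated_loc_of_deriv_le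
    (F := fun (v : ℝ) (s : ℝ) ↦ Complex.exp (((v:ℂ)*I - M)*s) * (s:ℂ)^(-(1/2):ℂ))
    (F' := fun (v : ℝ) (s : ℝ) ↦ (I*(s:ℂ)) * (Complex.exp (((v:ℂ)*I - M)*s) * (s:ℂ)^(-(1/2):ℂ)))
    (bound := fun s : ℝ ↦ s ^ ((1/2):ℝ) * Real.exp (-M * s))
    (x₀ := u) (μ := volume.restrict (Ioi 0)) (Metric.ball_mem_nhds u one_pos)
    (Filter.Eventually.of_forall (fun v ↦ meas_aux _ _))
    (cint hM u (by norm_num))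
    ((Continuous.aestronglyMeasurable (continuous_const.mul
      Complex.continuous_ofReal)).mul (meas_aux _ _))
    ?_ (real_int hM (by norm_num)).integrable ?_
  · obtain ⟨-, hd⟩ := main
    refine hd.congr_deriv (Eq.symm ?_)
    rw [← integral_const_mul]
    refine setIntegral_congr_fun measurableSet_Ioi (fun s hs ↦ ?_)
    have hs0 : (s:ℂ) ≠ 0 := Complex.ofReal_ne_zero.mpr (ne_of_gt hs)
    have : (s:ℂ) * (s:ℂ)^(-(1/2):ℂ) = (s:ℂ)^((1/2):ℂ) := by
      nth_rewrite 1 [← Complex.cpow_one (s:ℂ)]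
      rw [← Complex.cpow_add _ _ hs0]
      norm_num
    calc I * (Complex.exp (((u:ℂ)*I - M)*s) * (s:ℂ)^((1/2):ℂ))
        = I * (Complex.exp (((u:ℂ)*I - M)*s) * ((s:ℂ) * (s:ℂ)^(-(1/2):ℂ))) := by rw [this]
      _ = (I*(s:ℂ)) * (Complex.exp (((u:ℂ)*I - M)*s) * (s:ℂ)^(-(1/2):ℂ)) := by ring
  · -- bound
    filter_upwards [ae_restrict_mem measurableSet_Ioi] with s hs v hv
    rw [norm_mul, norm_aux v (-(1/2):ℂ) hs]
    have h1 : ‖I*(s:ℂ)‖ = s := by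
      rw [norm_mul, Complex.norm_I, one_mul, Complex.norm_real, Real.norm_eq_abs,
        abs_of_pos hs]
    rw [h1]
    have : s * (s ^ ((-(1/2):ℂ)).re * Real.exp (-M * s)) = s ^ ((1/2):ℝ) * Real.exp (-M*s) := by
      have : s * s ^ ((-(1/2):ℂ)).re = s ^ ((1/2):ℝ) := by
        nth_rewrite 1 [← Real.rpow_one s]
        rw [← Real.rpow_add hs]
        norm_num
      rw [← mul_assoc, this]
    rw [← mul_assoc] at this ⊢
    exact le_of_eq (by rw [this])
  · -- derivative of integrand
    filter_upwards [ae_restrict_mem measurableSet_Ioi] with s hs v hv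
    have hlin : HasDerivAt (fun v : ℝ ↦ (v:ℂ)*(I*(s:ℂ)) - (M:ℂ)*(s:ℂ)) (I*(s:ℂ)) v := by
      simpa using ((Complex.ofRealCLM.hasDerivAt (x := v)).mul_const (I*(s:ℂ))).sub_const ((M:ℂ)*s)
    have h := (hlin.cexp.mul_const ((s:ℂ)^(-(1/2):ℂ)))
    have hfe : (fun v : ℝ ↦ Complex.exp ((v:ℂ)*(I*(s:ℂ)) - (M:ℂ)*(s:ℂ)) * (s:ℂ)^(-(1/2):ℂ))
        = fun v : ℝ ↦ Complex.exp (((v:ℂ)*I - M)*(s:ℂ)) * (s:ℂ)^(-(1/2):ℂ) := by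
      funext w
      rw [show (w:ℂ)*(I*(s:ℂ)) - (M:ℂ)*(s:ℂ) = ((w:ℂ)*I - M)*(s:ℂ) by ring]
    rw [hfe] at h
    refine h.congr_deriv (Eq.symm ?_)
    rw [show (v:ℂ)*(I*(s:ℂ)) - (M:ℂ)*(s:ℂ) = ((v:ℂ)*I - M)*(s:ℂ) by ring]
    ring

lemma wslit (M v : ℝ) (hM : 0 < M) : ((M:ℂ) - (v:ℂ)*I) ∈ Complex.slitPlane := by
  refine Or.inl ?_
  simp [Complex.sub_re, Complex.mul_re]
  exact hM

lemma wne (M v : ℝ) (hM : 0 < M) : ((M:ℂ) - (v:ℂ)*I) ≠ 0 :=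
  Complex.slitPlane_ne_zero (wslit M v hM)

lemma w_hasDeriv (M : ℝ) (v : ℝ) :
    HasDerivAt (fun v : ℝ ↦ (M:ℂ) - (v:ℂ)*I) (-I) v := by
  simpa using HasDerivAt.const_sub ((M:ℂ))
    ((Complex.ofRealCLM.hasDerivAt (x := v)).mul_const I)

lemma inner_eval {M : ℝ} (hM : 0 < M) (u : ℝ) :
    ∫ s in Ioi (0:ℝ), Complex.exp (((u:ℂ)*I - M)*s) * (s:ℂ)^(-(1/2):ℂ)
      = Complex.Gamma (1/2) * ((M:ℂ) - (u:ℂ)*I)^(-(1/2):ℂ) := by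
  set F : ℝ → ℂ := fun v ↦ ∫ s in Ioi (0:ℝ), Complex.exp (((v:ℂ)*I - M)*s) * (s:ℂ)^(-(1/2):ℂ)
    with hF
  set H : ℝ → ℂ := fun v ↦ F v * ((M:ℂ) - (v:ℂ)*I)^((1/2):ℂ) with hH
  have hHderiv : ∀ v : ℝ, HasDerivAt H 0 v := by
    intro v
    have h1 : HasDerivAt F (I * (-(1/(2*((v:ℂ)*I - (M:ℂ)))) * F v)) v := by
      have := F_hasDeriv hM v
      rwa [ibp hM v] at this
    have h2 : HasDerivAt (fun v : ℝ ↦ ((M:ℂ) - (v:ℂ)*I)^((1/2):ℂ))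
        ((1/2:ℂ) * ((M:ℂ) - (v:ℂ)*I)^(((1/2):ℂ)-1) * (-I)) v :=
      by
      have hc : HasDerivAt (fun z : ℂ ↦ (M:ℂ) - z*I) (-I) ((v:ℂ)) := by
        simpa using HasDerivAt.const_sub ((M:ℂ)) ((hasDerivAt_id ((v:ℂ))).mul_const I)
      have := (hc.cpow_const (c := ((1/2):ℂ)) (wslit M v hM)).comp_ofReal
      simpa using this
    have h3 := h1.mul h2
    refine h3.congr_deriv (Eq.symm ?_)
    have hw : ((M:ℂ) - (v:ℂ)*I) ≠ 0 := wne M v hM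
    have hz : ((v:ℂ)*I - (M:ℂ)) = -((M:ℂ) - (v:ℂ)*I) := by ring
    have hsplit : ((M:ℂ) - (v:ℂ)*I)^(((1/2):ℂ)-1) * ((M:ℂ) - (v:ℂ)*I)
        = ((M:ℂ) - (v:ℂ)*I)^((1/2):ℂ) := by
      nth_rewrite 2 [← Complex.cpow_one ((M:ℂ) - (v:ℂ)*I)]
      rw [← Complex.cpow_add _ _ hw]
      norm_num
    have hsplit' : ((M:ℂ) - (v:ℂ)*I)^(((1/2):ℂ)-1)
        = ((M:ℂ) - (v:ℂ)*I)^((1/2):ℂ) * ((M:ℂ) - (v:ℂ)*I)⁻¹ := by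
      rw [← hsplit, mul_assoc, mul_inv_cancel₀ hw, mul_one]
    have hone : (1:ℂ)/(2*((v:ℂ)*I - (M:ℂ))) = -(((M:ℂ) - (v:ℂ)*I)⁻¹)/2 := by
      rw [hz, div_eq_div_iff (mul_ne_zero two_ne_zero (neg_ne_zero.mpr hw)) two_ne_zero,
        show -(((M:ℂ) - (v:ℂ)*I)⁻¹)*(2*(-((M:ℂ) - (v:ℂ)*I)))
          = 2*((((M:ℂ) - (v:ℂ)*I))⁻¹*((M:ℂ) - (v:ℂ)*I)) by ring,
        inv_mul_cancel₀ hw]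
      norm_num
    rw [hsplit', hone]
    ring
  have hconst : ∀ v : ℝ, H v = H 0 := by
    intro v
    exact is_const_of_deriv_eq_zero (fun x ↦ (hHderiv x).differentiableAt)
      (fun x ↦ (hHderiv x).deriv) v 0
  have hF0 : F 0 = (1/(M:ℂ))^((1/2):ℂ) * Complex.Gamma (1/2) := by
    rw [hF]
    rw [← Complex.integral_cpow_mul_exp_neg_mul_Ioi (by norm_num : (0:ℝ) < ((1/2):ℂ).re) hM]
    refine setIntegral_congr_fun measurableSet_Ioi (fun s hs ↦ ?_)
    rw [mul_comm]
    norm_num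
  have hH0 : H 0 = Complex.Gamma (1/2) := by
    rw [hH]
    simp only
    rw [hF0]
    rw [show ((M:ℂ) - ((0:ℝ):ℂ)*I) = (M:ℂ) by norm_num]
    rw [one_div, Complex.inv_cpow _ _ (by
      rw [Complex.arg_ofReal_of_nonneg hM.le]; exact Real.pi_ne_zero.symm)]
    have hMc : ((M:ℂ))^((1/2):ℂ) ≠ 0 := by
      intro h
      rw [Complex.cpow_eq_zero_iff] at h
      exact (Complex.ofReal_ne_zero.mpr hM.ne') h.1
    field_simp
  have := hconst u
  rw [hH0] at this
  -- this : H u = Gamma (1/2)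
  have hw : ((M:ℂ) - (u:ℂ)*I) ≠ 0 := wne M u hM
  have hinv : ((M:ℂ) - (u:ℂ)*I)^((1/2):ℂ) * ((M:ℂ) - (u:ℂ)*I)^(-(1/2):ℂ) = 1 := by
    rw [← Complex.cpow_add _ _ hw]
    norm_num
  have : F u * (((M:ℂ) - (u:ℂ)*I)^((1/2):ℂ) * ((M:ℂ) - (u:ℂ)*I)^(-(1/2):ℂ))
      = Complex.Gamma (1/2) * ((M:ℂ) - (u:ℂ)*I)^(-(1/2):ℂ) := by
    rw [← mul_assoc]
    exact congrArg (· * _) this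
  rwa [hinv, mul_one] at this

lemma anti_deriv {M : ℝ} (hM : 0 < M) (C : ℂ) (v : ℝ) :
    HasDerivAt (fun v : ℝ ↦ 2*I*C*((M:ℂ) - (v:ℂ)*I)^((1/2):ℂ))
      (C * ((M:ℂ) - (v:ℂ)*I)^(-(1/2):ℂ)) v := by
  have hc : HasDerivAt (fun z : ℂ ↦ (M:ℂ) - z*I) (-I) ((v:ℂ)) := by
    simpa using HasDerivAt.const_sub ((M:ℂ)) ((hasDerivAt_id ((v:ℂ))).mul_const I)
  have h2 := ((hc.cpow_const (c := ((1/2):ℂ)) (wslit M v hM)).comp_ofReal).const_mul (2*I*C)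
  refine h2.congr_deriv (Eq.symm ?_)
  rw [show ((1/2):ℂ)-1 = -(1/2) by norm_num]
  linear_combination (C*((M:ℂ) - (v:ℂ)*I)^(-(1/2):ℂ)) * Complex.I_sq

lemma integrand_cont {M : ℝ} (hM : 0 < M) (C : ℂ) :
    Continuous (fun v : ℝ ↦ C * ((M:ℂ) - (v:ℂ)*I)^(-(1/2):ℂ)) := by
  refine continuous_const.mul ?_
  rw [continuous_iff_continuousAt]
  intro v
  have hbase : Continuous (fun v : ℝ ↦ (M:ℂ) - (v:ℂ)*I) :=
    continuous_const.sub (Complex.continuous_ofReal.mul continuous_const)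
  exact ContinuousAt.comp (g := fun z : ℂ ↦ z^(-(1/2):ℂ)) (f := fun v : ℝ ↦ (M:ℂ) - (v:ℂ)*I)
    (continuousAt_cpow_const (wslit M v hM)) hbase.continuousAt

lemma sqrt4 : Real.sqrt 4 = 2 := by
  rw [show (4:ℝ) = 2^2 by norm_num, Real.sqrt_sq (by norm_num : (0:ℝ) ≤ 2)]

lemma two_sqrt_half {t : ℝ} : 2 * Real.sqrt (t/2) = Real.sqrt 2 * Real.sqrt t := by
  rw [← Real.sqrt_mul (by norm_num : (0:ℝ) ≤ 2) t,
    show (2:ℝ)*t = (2:ℝ)^2*(t/2) by ring,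
    Real.sqrt_mul (by positivity : (0:ℝ) ≤ (2:ℝ)^2) (t/2),
    Real.sqrt_sq (by norm_num : (0:ℝ) ≤ 2)]

lemma cpow_half_eval {M γ : ℝ} (hM : 0 < M) (hγ : 0 ≤ γ) :
    ((M:ℂ) - (γ:ℂ)*I)^((1/2):ℂ)
      = ((Real.sqrt ((Real.sqrt (M^2+γ^2) + M)/2) : ℝ) : ℂ)
        - ((Real.sqrt ((Real.sqrt (M^2+γ^2) - M)/2) : ℝ) : ℂ)*I := by
  set r : ℝ := Real.sqrt (M^2+γ^2) with hr
  have hr0 : 0 ≤ r := Real.sqrt_nonneg _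
  have hrM : M ≤ r := by
    rw [hr]
    refine (Real.le_sqrt hM.le (by positivity)).mpr (by nlinarith)
  have hr2 : r^2 = M^2+γ^2 := Real.sq_sqrt (by positivity)
  set a : ℝ := Real.sqrt ((r+M)/2) with ha
  set b : ℝ := Real.sqrt ((r-M)/2) with hb
  have ha2 : a^2 = (r+M)/2 := Real.sq_sqrt (by positivity)
  have hb2 : b^2 = (r-M)/2 := Real.sq_sqrt (by linarith)
  have hab : a*b = γ/2 := by
    rw [ha, hb, ← Real.sqrt_mul (by positivity), show (r+M)/2*((r-M)/2) = (r^2-M^2)/4 by ring,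
      hr2, show (M^2+γ^2-M^2)/4 = (γ/2)^2 by ring, Real.sqrt_sq (by positivity)]
  set w : ℂ := (M:ℂ) - (γ:ℂ)*I with hw
  have hwne : w ≠ 0 := wne M γ hM
  set ζ : ℂ := (a:ℂ) - (b:ℂ)*I with hζ
  have hζ2 : ζ^2 = w := by
    have h1 : ζ^2 = ((a^2 - b^2 :ℝ):ℂ) - ((2*(a*b):ℝ):ℂ)*I := by
      rw [hζ]; push_cast
      linear_combination ((b:ℂ)^2) * Complex.I_sq
    rw [h1, show a^2 - b^2 = M by rw [ha2, hb2]; ring, show 2*(a*b) = γ by rw [hab]; ring, hw]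
  have hw2 : (w^((1/2):ℂ))^2 = w := by
    rw [sq, ← Complex.cpow_add _ _ hwne, show ((1/2):ℂ)+(1/2) = 1 by norm_num,
      Complex.cpow_one]
  have harg : |w.arg| < Real.pi/2 :=
    Complex.abs_arg_lt_pi_div_two_iff.mpr (Or.inl (by
      rw [hw]; simp [Complex.sub_re, Complex.mul_re]; exact hM))
  have hre : 0 < (w^((1/2):ℂ)).re := by
    rw [Complex.cpow_def_of_ne_zero hwne, Complex.exp_re]
    have him : (Complex.log w * (1/2)).im = w.arg / 2 := by
      simp [Complex.mul_im, Complex.log_im]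
      ring
    rw [him]
    have hpi : 0 < Real.pi := Real.pi_pos
    have habs := abs_lt.mp harg
    refine mul_pos (Real.exp_pos _) (Real.cos_pos_of_mem_Ioo ⟨by linarith [habs.1], by
      linarith [habs.2]⟩)
  have hsumne : w^((1/2):ℂ) + ζ ≠ 0 := by
    intro h
    have := congrArg Complex.re h
    simp only [Complex.add_re, Complex.zero_re] at this
    have hζre : ζ.re = a := by
      rw [hζ]; simp [Complex.sub_re, Complex.mul_re]
    have hanneg : 0 ≤ a := Real.sqrt_nonneg _
    rw [hζre] at this
    linarith
  have hfac : (w^((1/2):ℂ) - ζ) * (w^((1/2):ℂ) + ζ) = 0 := by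
    linear_combination hw2 - hζ2
  have hz0 := (mul_eq_zero.mp hfac).resolve_right hsumne
  exact sub_eq_zero.mp hz0

theorem stmt4 (γ M : ℝ) (hγ : 0 ≤ γ) (hM : 0 < M) :
    ∫ u in (0:ℝ)..γ, ∫ s in Set.Ioi (0:ℝ),
      Complex.exp ((u * Complex.I - M) * s) * (s : ℂ) ^ (-(1/2) : ℂ) =
      (Real.sqrt (2 * Real.pi) : ℂ) *
        ((Real.sqrt (Real.sqrt (M^2 + γ^2) - M) : ℝ) +
          Complex.I *
            ((Real.sqrt (Real.sqrt (M^2 + γ^2) + M) - Real.sqrt (2*M) : ℝ))) := by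
  have hC : Complex.Gamma (1/2) = ((Real.sqrt Real.pi : ℝ) : ℂ) := by
    rw [Complex.Gamma_one_half_eq, Real.sqrt_eq_rpow, Complex.ofReal_cpow Real.pi_pos.le]
    norm_num
  have h1 : (∫ u in (0:ℝ)..γ, ∫ s in Set.Ioi (0:ℝ),
      Complex.exp ((u * Complex.I - M) * s) * (s : ℂ) ^ (-(1/2) : ℂ))
      = ∫ u in (0:ℝ)..γ, Complex.Gamma (1/2) * ((M:ℂ) - (u:ℂ)*I)^(-(1/2):ℂ) :=
    intervalIntegral.integral_congr (fun u _ ↦ inner_eval hM u)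
  rw [h1]
  have hftc := intervalIntegral.integral_eq_sub_of_hasDerivAt
    (f := fun v : ℝ ↦ 2*I*(Complex.Gamma (1/2))*((M:ℂ) - (v:ℂ)*I)^((1/2):ℂ))
    (f' := fun v : ℝ ↦ Complex.Gamma (1/2) * ((M:ℂ) - (v:ℂ)*I)^(-(1/2):ℂ))
    (fun v _ ↦ anti_deriv hM _ v)
    ((integrand_cont hM _).intervalIntegrable 0 γ)
  rw [hftc]
  rw [cpow_half_eval hM hγ,
    show ((M:ℂ) - ((0:ℝ):ℂ)*I) = ((M:ℝ):ℂ) by push_cast; ring]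
  have hM12 : ((M:ℝ):ℂ)^((1/2):ℂ) = ((Real.sqrt M : ℝ):ℂ) := by
    rw [Real.sqrt_eq_rpow, Complex.ofReal_cpow hM.le]
    norm_num
  rw [hM12, hC]
  set r : ℝ := Real.sqrt (M^2+γ^2) with hr
  have hrM : M ≤ r := (Real.le_sqrt hM.le (by positivity)).mpr (by nlinarith)
  have h2s : Real.sqrt 2 * Real.sqrt 2 = 2 := Real.mul_self_sqrt (by norm_num)
  have E1 : 2*Real.sqrt Real.pi*Real.sqrt ((r-M)/2)
      = Real.sqrt (2*Real.pi)*Real.sqrt (r-M) := by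
    rw [Real.sqrt_mul (by norm_num : (0:ℝ) ≤ 2) Real.pi]
    linear_combination Real.sqrt Real.pi * two_sqrt_half (t := r - M)
  have E2 : 2*Real.sqrt Real.pi*Real.sqrt ((r+M)/2)
      = Real.sqrt (2*Real.pi)*Real.sqrt (r+M) := by
    rw [Real.sqrt_mul (by norm_num : (0:ℝ) ≤ 2) Real.pi]
    linear_combination Real.sqrt Real.pi * two_sqrt_half (t := r + M)
  have E3 : 2*Real.sqrt Real.pi*Real.sqrt M = Real.sqrt (2*Real.pi)*Real.sqrt (2*M) := by
    rw [Real.sqrt_mul (by norm_num : (0:ℝ) ≤ 2) Real.pi,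
      Real.sqrt_mul (by norm_num : (0:ℝ) ≤ 2) M]
    linear_combination (-(Real.sqrt Real.pi * Real.sqrt M)) * h2s
  have E1' := congrArg (fun x : ℝ ↦ (x : ℂ)) E1
  have E2' := congrArg (fun x : ℝ ↦ (x : ℂ)) E2
  have E3' := congrArg (fun x : ℝ ↦ (x : ℂ)) E3
  push_cast at E1' E2' E3'
  push_cast
  linear_combination I*E2' - I*E3' + E1'
    - (2*((Real.sqrt Real.pi : ℝ):ℂ)*((Real.sqrt ((r-M)/2) : ℝ):ℂ))*Complex.I_sq
end

section
/- Fix α > 5/2, −3/2 < β ≤ −1/2 with β + 4 < α, δ > 0, and a ∈ (3/2, 2]. For v ≥ 0, let M₁' := (v² + α² − (a+1+β)²)/α², b' := 2(a+1+β)v/α², M₁ := (v² + α² − (a+β)²)/α², b := 2(a+β)v/α², and define W(v,c) := (δα/√2)(i√(√(M₁(c)²+b(c)²) − M₁(c)) − √(√(M₁(c)²+b(c)²) + M₁(c)) + √(2M₂)) with M₂ := 1 − β²/α² (with c = a or a+1). Then |W(v,a+1) − W(v,a)| ≤ √2·δ·( v + √(α² − (a+β)² + 2(a+1+β)²) ).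 -/
set_option maxHeartbeats 1000000

lemma aux_sqrt_add_le (x y : ℝ) (hx : 0 ≤ x) (hy : 0 ≤ y) :
    Real.sqrt (x + y) ≤ Real.sqrt x + Real.sqrt y := by
  have h1 := Real.sq_sqrt hx
  have h2 := Real.sq_sqrt hy
  have h3 := Real.sqrt_nonneg x
  have h4 := Real.sqrt_nonneg y
  have : x + y ≤ (Real.sqrt x + Real.sqrt y)^2 := by nlinarith [mul_nonneg h3 h4]
  calc Real.sqrt (x + y) ≤ Real.sqrt ((Real.sqrt x + Real.sqrt y)^2) :=
        Real.sqrt_le_sqrt this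
    _ = Real.sqrt x + Real.sqrt y := Real.sqrt_sq (by linarith)

lemma aux_sqrt_diff {u w : ℝ} (hu : 0 ≤ u) (hw : 0 ≤ w) :
    |Real.sqrt u - Real.sqrt w| ≤ Real.sqrt |u - w| := by
  rcases le_total w u with h | h
  · rw [abs_of_nonneg (sub_nonneg.mpr (Real.sqrt_le_sqrt h)),
      abs_of_nonneg (sub_nonneg.mpr h)]
    have := aux_sqrt_add_le w (u - w) hw (by linarith)
    rw [show w + (u - w) = u by ring] at this
    linarith
  · rw [abs_of_nonpos (sub_nonpos.mpr (Real.sqrt_le_sqrt h)),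
      abs_of_nonpos (sub_nonpos.mpr h)]
    have := aux_sqrt_add_le u (w - u) hu (by linarith)
    rw [show u + (w - u) = w by ring] at this
    rw [show -(u - w) = w - u by ring]
    linarith

lemma aux_sqrt_sq_add_sq_le (p q : ℝ) (hp : 0 ≤ p) (hq : 0 ≤ q) :
    Real.sqrt (p^2 + q^2) ≤ p + q := by
  calc Real.sqrt (p^2 + q^2) ≤ Real.sqrt ((p + q)^2) :=
        Real.sqrt_le_sqrt (by nlinarith [mul_nonneg hp hq])
    _ = p + q := Real.sqrt_sq (by linarith)

lemma aux_sqrtK_le (t v A : ℝ) (ht : 0 < t) (hv : 0 ≤ v) (hA : 0 ≤ A) :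
    Real.sqrt (4*t + 2 + 2*v) ≤ v + Real.sqrt (A + t^2 + 4*t + 2) := by
  set S : ℝ := A + t^2 + 4*t + 2 with hS
  have hS0 : 0 ≤ S := by nlinarith [sq_nonneg t]
  have hS1 : 1 ≤ Real.sqrt S := by
    rw [show (1:ℝ) = Real.sqrt 1 by simp]
    exact Real.sqrt_le_sqrt (by nlinarith [sq_nonneg t])
  have hsq := Real.sq_sqrt hS0
  have hKS : 4*t + 2 + 2*v ≤ (v + Real.sqrt S)^2 := by
    nlinarith [mul_nonneg hv (by linarith : (0:ℝ) ≤ Real.sqrt S - 1), sq_nonneg v,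
      sq_nonneg t]
  calc Real.sqrt (4*t + 2 + 2*v) ≤ Real.sqrt ((v + Real.sqrt S)^2) :=
        Real.sqrt_le_sqrt hKS
    _ = v + Real.sqrt S := Real.sqrt_sq (by positivity)

theorem stmt15 (α β δ : ℝ) (hα : 5/2 < α) (hβ₁ : -(3/2) < β) (hβ₂ : β ≤ -(1/2))
    (hβα : β + 4 < α) (hδ : 0 < δ)
    (a : ℝ) (ha₁ : 3/2 < a) (ha₂ : a ≤ 2) (v : ℝ) (hv : 0 ≤ v)
    (M₁ b M₁' b' M₂ : ℝ)
    (hM₁ : M₁ = (v^2 + α^2 - (a+β)^2) / α^2)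
    (hb : b = 2*(a+β)*v / α^2)
    (hM₁' : M₁' = (v^2 + α^2 - (a+1+β)^2) / α^2)
    (hb' : b' = 2*(a+1+β)*v / α^2)
    (hM₂ : M₂ = 1 - β^2/α^2)
    (W W' : ℂ)
    (hW : W = (δ * α / Real.sqrt 2 : ℝ) *
      (Complex.I * (Real.sqrt (Real.sqrt (M₁^2 + b^2) - M₁) : ℝ) -
        (Real.sqrt (Real.sqrt (M₁^2 + b^2) + M₁) : ℝ) + (Real.sqrt (2*M₂) : ℝ)))
    (hW' : W' = (δ * α / Real.sqrt 2 : ℝ) *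
      (Complex.I * (Real.sqrt (Real.sqrt (M₁'^2 + b'^2) - M₁') : ℝ) -
        (Real.sqrt (Real.sqrt (M₁'^2 + b'^2) + M₁') : ℝ) + (Real.sqrt (2*M₂) : ℝ))) :
    ‖W' - W‖ ≤
      Real.sqrt 2 * δ * (v + Real.sqrt (α^2 - (a+β)^2 + 2*(a+1+β)^2)) := by
  have hα0 : (0:ℝ) < α := by linarith
  have hα2 : (0:ℝ) < α^2 := by positivity
  have ht0 : 0 < a + β := by linarith
  have ht32 : a + β ≤ 3/2 := by linarith
  set r := Real.sqrt (M₁^2 + b^2) with hrdef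
  set r' := Real.sqrt (M₁'^2 + b'^2) with hr'def
  set x := Real.sqrt (r - M₁) with hxdef
  set x' := Real.sqrt (r' - M₁') with hx'def
  set y := Real.sqrt (r + M₁) with hydef
  set y' := Real.sqrt (r' + M₁') with hy'def
  set c := δ * α / Real.sqrt 2 with hcdef
  have h2pos : (0:ℝ) < Real.sqrt 2 := Real.sqrt_pos.mpr (by norm_num)
  have hc0 : 0 < c := by positivity
  -- |M₁| ≤ r and |M₁'| ≤ r'
  have hrM : |M₁| ≤ r := by
    rw [hrdef, ← Real.sqrt_sq_eq_abs]
    exact Real.sqrt_le_sqrt (le_add_of_nonneg_right (sq_nonneg b))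
  have hrM' : |M₁'| ≤ r' := by
    rw [hr'def, ← Real.sqrt_sq_eq_abs]
    exact Real.sqrt_le_sqrt (le_add_of_nonneg_right (sq_nonneg b'))
  have hrM1 := abs_le.mp hrM
  have hrM1' := abs_le.mp hrM'
  have hxu : 0 ≤ r - M₁ := by linarith [hrM1.2]
  have hyu : 0 ≤ r + M₁ := by linarith [hrM1.1]
  have hxu' : 0 ≤ r' - M₁' := by linarith [hrM1'.2]
  have hyu' : 0 ≤ r' + M₁' := by linarith [hrM1'.1]
  -- difference of W
  have hdiff : W' - W = (c:ℂ) * (Complex.I * ((x':ℂ) - (x:ℂ)) - ((y':ℂ) - (y:ℂ))) := by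
    rw [hW, hW']; ring
  have habs : ‖W' - W‖ ≤ c * (|x' - x| + |y' - y|) := by
    rw [hdiff, norm_mul, Complex.norm_real, Real.norm_eq_abs, abs_of_pos hc0]
    refine mul_le_mul_of_nonneg_left ?_ hc0.le
    calc ‖(Complex.I * ((x':ℂ) - (x:ℂ)) - ((y':ℂ) - (y:ℂ)))‖
        ≤ ‖(Complex.I * ((x':ℂ) - (x:ℂ)))‖ + ‖((y':ℂ) - (y:ℂ))‖ :=
          norm_sub_le _ _
      _ = |x' - x| + |y' - y| := by
          rw [norm_mul, Complex.norm_I, one_mul, ← Complex.ofReal_sub,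
            ← Complex.ofReal_sub, Complex.norm_real, Complex.norm_real, Real.norm_eq_abs,
            Real.norm_eq_abs]
  -- bound |r' - r|
  have hMdiff : M₁ - M₁' = (2*(a+β)+1) / α^2 := by
    rw [hM₁, hM₁']; field_simp; ring
  have hbdiff : b' - b = 2*v / α^2 := by
    rw [hb, hb']; field_simp; ring
  have hrr : |r' - r| ≤ (2*(a+β)+1 + 2*v) / α^2 := by
    have h1 : |r' - r| ≤ Real.sqrt ((M₁' - M₁)^2 + (b' - b)^2) := by
      have key : r' - r = ‖((M₁':ℂ) + (b':ℝ) * Complex.I)‖ -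
          ‖((M₁:ℂ) + (b:ℝ) * Complex.I)‖ := by
        rw [Complex.norm_add_mul_I, Complex.norm_add_mul_I, hrdef, hr'def]
      rw [key]
      calc |‖((M₁':ℂ) + (b':ℝ) * Complex.I)‖ -
            ‖((M₁:ℂ) + (b:ℝ) * Complex.I)‖|
          ≤ ‖(((M₁':ℂ) + (b':ℝ) * Complex.I) -
              ((M₁:ℂ) + (b:ℝ) * Complex.I))‖ := abs_norm_sub_norm_le _ _
        _ = Real.sqrt ((M₁' - M₁)^2 + (b' - b)^2) := by
            rw [show ((M₁':ℂ) + (b':ℝ) * Complex.I) - ((M₁:ℂ) + (b:ℝ) * Complex.I)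
              = ((M₁' - M₁ : ℝ):ℂ) + ((b' - b : ℝ):ℂ) * Complex.I by
                push_cast; ring]
            exact Complex.norm_add_mul_I _ _
    refine h1.trans ?_
    have e1 : (M₁' - M₁)^2 + (b' - b)^2
        = ((2*(a+β)+1)/α^2)^2 + (2*v/α^2)^2 := by
      rw [show M₁' - M₁ = -(M₁ - M₁') by ring, hMdiff, hbdiff]; ring
    rw [e1]
    calc Real.sqrt (((2*(a+β)+1)/α^2)^2 + (2*v/α^2)^2)
        ≤ (2*(a+β)+1)/α^2 + 2*v/α^2 :=
          aux_sqrt_sq_add_sq_le _ _ (by positivity) (by positivity)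
      _ = (2*(a+β)+1 + 2*v) / α^2 := by ring
  -- set K
  set K : ℝ := 4*(a+β) + 2 + 2*v with hK
  have hK0 : 0 ≤ K := by positivity
  have hDbound : |(r' - M₁') - (r - M₁)| ≤ K / α^2 ∧
      |(r' + M₁') - (r + M₁)| ≤ K / α^2 := by
    have hMpos : 0 ≤ M₁ - M₁' := by
      rw [hMdiff]; positivity
    constructor
    · calc |(r' - M₁') - (r - M₁)| = |(r' - r) + (M₁ - M₁')| := by ring_nf
        _ ≤ |r' - r| + |M₁ - M₁'| := abs_add_le _ _
        _ ≤ (2*(a+β)+1 + 2*v)/α^2 + (2*(a+β)+1)/α^2 := by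
            rw [abs_of_nonneg hMpos, hMdiff]
            exact add_le_add hrr le_rfl
        _ = K / α^2 := by rw [hK]; ring
    · calc |(r' + M₁') - (r + M₁)| = |(r' - r) - (M₁ - M₁')| := by ring_nf
        _ ≤ |r' - r| + |M₁ - M₁'| := abs_sub _ _
        _ ≤ (2*(a+β)+1 + 2*v)/α^2 + (2*(a+β)+1)/α^2 := by
            rw [abs_of_nonneg hMpos, hMdiff]
            exact add_le_add hrr le_rfl
        _ = K / α^2 := by rw [hK]; ring
  have hxx : |x' - x| ≤ Real.sqrt K / α := by
    calc |x' - x| ≤ Real.sqrt |(r' - M₁') - (r - M₁)| := aux_sqrt_diff hxu' hxu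
      _ ≤ Real.sqrt (K / α^2) := Real.sqrt_le_sqrt (by
          have := hDbound.1; linarith [abs_nonneg ((r' - M₁') - (r - M₁))])
      _ = Real.sqrt K / α := by
          rw [Real.sqrt_div hK0, Real.sqrt_sq hα0.le]
  have hyy : |y' - y| ≤ Real.sqrt K / α := by
    calc |y' - y| ≤ Real.sqrt |(r' + M₁') - (r + M₁)| := aux_sqrt_diff hyu' hyu
      _ ≤ Real.sqrt (K / α^2) := Real.sqrt_le_sqrt (by
          have := hDbound.2; linarith [abs_nonneg ((r' + M₁') - (r + M₁))])
      _ = Real.sqrt K / α := by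
          rw [Real.sqrt_div hK0, Real.sqrt_sq hα0.le]
  -- combine
  have hmain : ‖W' - W‖ ≤ Real.sqrt 2 * δ * Real.sqrt K := by
    refine habs.trans ?_
    have h1 : c * (|x' - x| + |y' - y|) ≤ c * (Real.sqrt K / α + Real.sqrt K / α) := by
      refine mul_le_mul_of_nonneg_left ?_ hc0.le
      exact add_le_add hxx hyy
    refine h1.trans_eq ?_
    rw [hcdef]
    have h2 : Real.sqrt 2 * Real.sqrt 2 = 2 := Real.mul_self_sqrt (by norm_num)
    rw [show Real.sqrt K / α + Real.sqrt K / α = 2 * Real.sqrt K / α by ring,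
      div_mul_div_comm, div_eq_iff (by positivity : Real.sqrt 2 * α ≠ 0),
      show Real.sqrt 2 * δ * Real.sqrt K * (Real.sqrt 2 * α)
        = (Real.sqrt 2 * Real.sqrt 2) * (δ * Real.sqrt K * α) by ring, h2]
    ring
  refine hmain.trans ?_
  -- final: sqrt K ≤ v + sqrt S
  have hfin : Real.sqrt K ≤ v + Real.sqrt (α^2 - (a+β)^2 + 2*(a+1+β)^2) := by
    have e : α^2 - (a+β)^2 + 2*(a+1+β)^2 = α^2 + (a+β)^2 + 4*(a+β) + 2 := by ring
    rw [hK, e]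
    exact aux_sqrtK_le (a+β) v (α^2) ht0 hv (sq_nonneg α)
  exact mul_le_mul_of_nonneg_left hfin (by positivity)
end
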